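/- arXiv:2506.17094 — 2 statements merged into one kernel-verified Lean document; each statement's English description precedes it below -/
import Mathlib

section
/- Let φ: ℝ → ℝ be continuous and nonincreasing, and φ_n(u) := n((I − φ/n)^{-1}(u) − u) its Yosida approximation. Then for every R > 0, sup_{|u| ≤ R} |φ_n(u) − φ(u)| → 0 as n → ∞. -/
/-!
Write `v = ψ n u`, so that `v - φ v / n = u` and `φ_n u = n (v - u) = φ v`. Monotonicity of `φ`
forces `φ v` to have the sign of `v - u`, which gives `|φ v| ≤ |φ u|`; on `|u| ≤ R` this is bounded
by `M = max |φ R| |φ (-R)|`. Hence `|v - u| ≤ M / n`, and uniform continuity of `φ` on a compact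
interval turns this into `|φ v - φ u| ≤ ε` uniformly in `|u| ≤ R` for large `n`.
-/

namespace Antitone

variable {φ : ℝ → ℝ}

theorem abs_apply_le_max_of_abs_le (hφ : Antitone φ) {R u : ℝ} (hu : |u| ≤ R) :
    |φ u| ≤ max |φ R| |φ (-R)| := by
  obtain ⟨huR', huR⟩ := abs_le.1 hu
  have h₁ : φ R ≤ φ u := hφ huR
  have h₂ : φ u ≤ φ (-R) := hφ huR'
  refine abs_le.2 ⟨?_, ?_⟩
  · linarith [neg_abs_le (φ R), le_max_left |φ R| |φ (-R)|]
  · linarith [le_abs_self (φ (-R)), le_max_right |φ R| |φ (-R)|]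

theorem abs_apply_le_of_sub_mul_eq (hφ : Antitone φ) {c u v : ℝ} (hc : 0 ≤ c)
    (h : v - c * φ v = u) : |φ v| ≤ |φ u| := by
  rcases le_or_gt 0 (φ v) with hv | hv
  · have : φ v ≤ φ u := hφ (by nlinarith)
    rw [abs_of_nonneg hv]
    exact this.trans (le_abs_self _)
  · have : φ u ≤ φ v := hφ (by nlinarith)
    rw [abs_of_neg hv]
    exact (neg_le_neg this).trans (neg_le_abs _)

end Antitone

theorem exists_forall_abs_apply_sub_le_of_sub_mul_eq {φ : ℝ → ℝ} (hφc : Continuous φ)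
    (hφm : Antitone φ) (R : ℝ) {ε : ℝ} (hε : 0 < ε) :
    ∃ δ > 0, ∀ c u v : ℝ, 0 ≤ c → c ≤ δ → |u| ≤ R → v - c * φ v = u →
      |φ v - φ u| ≤ ε := by
  set M := max |φ R| |φ (-R)|
  have hM : 0 ≤ M := (abs_nonneg _).trans (le_max_left _ _)
  have hUC : UniformContinuousOn φ (Metric.closedBall 0 (R + M)) :=
    (isCompact_closedBall 0 _).uniformContinuousOn_of_continuous hφc.continuousOn
  obtain ⟨δ, hδ, hδφ⟩ := Metric.uniformContinuousOn_iff_le.1 hUC ε hε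
  refine ⟨min 1 (δ / (M + 1)), by positivity, fun c u v hc hcδ hu h ↦ ?_⟩
  have hφv : |φ v| ≤ M :=
    (hφm.abs_apply_le_of_sub_mul_eq hc h).trans (hφm.abs_apply_le_max_of_abs_le hu)
  have hvu : |v - u| = c * |φ v| := by
    rw [show v - u = c * φ v by linarith, abs_mul, abs_of_nonneg hc]
  have hcM : c * |φ v| ≤ min 1 (δ / (M + 1)) * M := mul_le_mul hcδ hφv (abs_nonneg _)
    (by positivity)
  have hvu_le_M : |v - u| ≤ M := by
    nlinarith [min_le_left 1 (δ / (M + 1))]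
  have hvu_le_δ : |v - u| ≤ δ := by
    have : δ / (M + 1) * M ≤ δ := by
      rw [div_mul_eq_mul_div, div_le_iff₀ (by positivity)]
      nlinarith
    nlinarith [min_le_right 1 (δ / (M + 1))]
  have hu_mem : u ∈ Metric.closedBall (0 : ℝ) (R + M) := by
    rw [mem_closedBall_zero_iff, Real.norm_eq_abs]; linarith
  have hv_mem : v ∈ Metric.closedBall (0 : ℝ) (R + M) := by
    rw [mem_closedBall_zero_iff, Real.norm_eq_abs]
    linarith [abs_sub_abs_le_abs_sub v u]
  simpa only [Real.dist_eq] using hδφ v hv_mem u hu_mem (by rwa [Real.dist_eq])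

theorem stmt_5_general (φ : ℝ → ℝ) (hφc : Continuous φ) (hφm : Antitone φ)
    (ψ : ℕ → ℝ → ℝ)
    (hψr : ∀ n : ℕ, 1 ≤ n → Function.RightInverse (ψ n) (fun u : ℝ => u - φ u / n))
    (R : ℝ) :
    ∀ ε > 0, ∃ N : ℕ, ∀ n : ℕ, N ≤ n → ∀ u : ℝ, |u| ≤ R →
      |(n : ℝ) * (ψ n u - u) - φ u| ≤ ε := by
  intro ε hε
  obtain ⟨δ, hδ, hδφ⟩ := exists_forall_abs_apply_sub_le_of_sub_mul_eq hφc hφm R hε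
  obtain ⟨N, hN⟩ := exists_nat_one_div_lt hδ
  refine ⟨N + 1, fun n hn u hu ↦ ?_⟩
  have hn0 : (0 : ℝ) < n := by exact_mod_cast (Nat.succ_pos N).trans_le hn
  have hres : ψ n u - (n : ℝ)⁻¹ * φ (ψ n u) = u := by
    rw [inv_mul_eq_div]; exact hψr n (by omega) u
  have hinv : (n : ℝ)⁻¹ ≤ δ := by
    rw [inv_eq_one_div]
    refine le_trans (one_div_le_one_div_of_le (by positivity) ?_) hN.le
    exact_mod_cast hn
  have hφn : (n : ℝ) * (ψ n u - u) = φ (ψ n u) := by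
    rw [show ψ n u - u = (n : ℝ)⁻¹ * φ (ψ n u) by linarith, mul_inv_cancel_left₀ hn0.ne']
  rw [hφn]
  exact hδφ _ u _ (by positivity) hinv hu hres

/-- For `φ : ℝ → ℝ` continuous and nonincreasing, with `ψ n` the inverse of `I − φ/n`
and Yosida approximation `φ_n(u) := n (ψ n u − u)`, one has, for every `R > 0`,
`sup_{|u| ≤ R} |φ_n u − φ u| → 0` as `n → ∞`. -/
theorem stmt_5 (φ : ℝ → ℝ) (hφc : Continuous φ) (hφm : Antitone φ)
    (ψ : ℕ → ℝ → ℝ)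
    (hψl : ∀ n : ℕ, 1 ≤ n → Function.LeftInverse (ψ n) (fun u : ℝ => u - φ u / n))
    (hψr : ∀ n : ℕ, 1 ≤ n → Function.RightInverse (ψ n) (fun u : ℝ => u - φ u / n))
    (R : ℝ) (hR : 0 < R) :
    ∀ ε > 0, ∃ N : ℕ, ∀ n : ℕ, N ≤ n → ∀ u : ℝ, |u| ≤ R →
      |(n : ℝ) * (ψ n u - u) - φ u| ≤ ε :=
  stmt_5_general φ hφc hφm ψ hψr R
end

section
/- With K, Y, e_i as above and additionally |(S(s)(Y e_i))(ξ)| ≤ ‖e_i‖_∞ (S(s)|Y|)(ξ) ≤ ‖e_i‖_∞ ‖Y‖_∞, one has for every ζ ≥ 1 the estimate Σ_{i=1}^∞ |(S(s)(Y e_i))(ξ)|^{2ζ} ‖e_i‖_∞^{−2(ζ−1)} ≤ k₁ s^{−d/2} ‖Y‖_∞^{2ζ}. -/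
/-! Writing `a_i = (S(s)(Y e_i))(ξ)`, the pointwise bound gives `|a_i| / μ_i ≤ R`, so the `i`-th
term `(|a_i| / μ_i)^{2(ζ-1)} a_i²` is at most `R^{2(ζ-1)} a_i²`; summing and applying the
Parseval bound finishes the proof. -/

open MeasureTheory Set

lemma abs_rpow_add_two_mul_rpow_neg_le {a m R p : ℝ} (hm : 0 < m) (ha : |a| ≤ m * R)
    (hp : 0 ≤ p) : |a| ^ (p + 2) * m ^ (-p) ≤ R ^ p * a ^ 2 := by
  have hquot : |a| / m ≤ R := (div_le_iff₀' hm).2 ha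
  calc |a| ^ (p + 2) * m ^ (-p) = (|a| / m) ^ p * a ^ 2 := by
        rw [Real.rpow_add' (abs_nonneg a) (by positivity), Real.div_rpow (abs_nonneg a) hm.le,
          Real.rpow_neg hm.le, Real.rpow_two, sq_abs]
        ring
    _ ≤ R ^ p * a ^ 2 := by gcongr

theorem stmt_12_general {d : ℕ} (O : Set (Fin d → ℝ))
    (e : ℕ → (Fin d → ℝ) → ℝ) (μ : ℕ → ℝ) (hμ : ∀ i, 0 < μ i)
    (s : ℝ) (ξ : Fin d → ℝ)
    (K : ℝ → (Fin d → ℝ) → (Fin d → ℝ) → ℝ)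
    (k₁ : ℝ)
    (Y : (Fin d → ℝ) → ℝ)
    (R : ℝ) (hR : 0 ≤ R)
    (hSbd : ∀ i, |∫ y in O, K s ξ y * Y y * e i y| ≤ μ i * R)
    (hsummable : Summable (fun i => (∫ y in O, K s ξ y * Y y * e i y) ^ 2))
    (hParsevalBd : ∑' i, (∫ y in O, K s ξ y * Y y * e i y) ^ 2
        ≤ k₁ * s ^ (-(d : ℝ) / 2) * R ^ 2)
    (ζ : ℝ) (hζ : 1 ≤ ζ) :
    ∑' i, |∫ y in O, K s ξ y * Y y * e i y| ^ (2 * ζ) * (μ i) ^ (-(2 * (ζ - 1)))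
      ≤ k₁ * s ^ (-(d : ℝ) / 2) * R ^ (2 * ζ) := by
  set a : ℕ → ℝ := fun i => ∫ y in O, K s ξ y * Y y * e i y
  have hexp : 2 * ζ = 2 * (ζ - 1) + 2 := by ring
  have hterm : ∀ i, |a i| ^ (2 * ζ) * μ i ^ (-(2 * (ζ - 1))) ≤ R ^ (2 * (ζ - 1)) * a i ^ 2 :=
    fun i => hexp ▸ abs_rpow_add_two_mul_rpow_neg_le (hμ i) (hSbd i) (by linarith)
  have hdom : Summable fun i => R ^ (2 * (ζ - 1)) * a i ^ 2 := hsummable.mul_left _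
  calc ∑' i, |a i| ^ (2 * ζ) * μ i ^ (-(2 * (ζ - 1)))
      ≤ ∑' i, R ^ (2 * (ζ - 1)) * a i ^ 2 :=
        (hdom.of_nonneg_of_le (fun i => mul_nonneg (by positivity)
          (Real.rpow_nonneg (hμ i).le _)) hterm).tsum_le_tsum hterm hdom
    _ = R ^ (2 * (ζ - 1)) * ∑' i, a i ^ 2 := tsum_mul_left
    _ ≤ R ^ (2 * (ζ - 1)) * (k₁ * s ^ (-(d : ℝ) / 2) * R ^ 2) := by gcongr
    _ = k₁ * s ^ (-(d : ℝ) / 2) * R ^ (2 * ζ) := by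
        rw [hexp, Real.rpow_add' hR (by linarith), Real.rpow_two]
        ring

/-- Weighted interpolation bound: with `μ_i = ‖e_i‖_∞`, the pointwise bound
`|(S(s)(Y e_i))(ξ)| ≤ μ_i ‖Y‖_∞` and the Parseval bound
`∑_i |(S(s)(Y e_i))(ξ)|² ≤ k₁ s^{−d/2} ‖Y‖_∞²` give, for every `ζ ≥ 1`,
`∑_i |(S(s)(Y e_i))(ξ)|^{2ζ} μ_i^{−2(ζ−1)} ≤ k₁ s^{−d/2} ‖Y‖_∞^{2ζ}`. -/
theorem stmt_12 {d : ℕ} (O : Set (Fin d → ℝ))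
    (e : ℕ → (Fin d → ℝ) → ℝ) (μ : ℕ → ℝ) (hμ : ∀ i, 0 < μ i)
    (heμ : ∀ i, ∀ y, |e i y| ≤ μ i)
    (s : ℝ) (hs : 0 < s) (ξ : Fin d → ℝ)
    (K : ℝ → (Fin d → ℝ) → (Fin d → ℝ) → ℝ)
    (k₁ : ℝ) (hk₁ : 0 < k₁)
    (Y : (Fin d → ℝ) → ℝ)
    (R : ℝ) (hR : 0 ≤ R) (hYbd : ∀ y, |Y y| ≤ R)
    (hSbd : ∀ i, |∫ y in O, K s ξ y * Y y * e i y| ≤ μ i * R)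
    (hsummable : Summable (fun i => (∫ y in O, K s ξ y * Y y * e i y) ^ 2))
    (hParsevalBd : ∑' i, (∫ y in O, K s ξ y * Y y * e i y) ^ 2
        ≤ k₁ * s ^ (-(d : ℝ) / 2) * R ^ 2)
    (ζ : ℝ) (hζ : 1 ≤ ζ) :
    ∑' i, |∫ y in O, K s ξ y * Y y * e i y| ^ (2 * ζ) * (μ i) ^ (-(2 * (ζ - 1)))
      ≤ k₁ * s ^ (-(d : ℝ) / 2) * R ^ (2 * ζ) :=
  stmt_12_general O e μ hμ s ξ K k₁ Y R hR hSbd hsummable hParsevalBd ζ hζ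
end
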